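/- arXiv:0711.0089 — 3 statements merged into one kernel-verified Lean document; each statement's English description precedes it below -/
import Mathlib

section
/- Let D and D_n be closed densely defined operators on a Hilbert space H whose adjoints are densely defined, with Dom D ⊆ Dom D_n and Dom D* ⊆ Dom D_n*. Assume D_n f → D f for all f ∈ Dom D and D_n* f → D* f for all f ∈ Dom D*. Then for every z ∈ ℂ \ [0,∞), (D_n* D_n - z)⁻¹ → (D* D - z)⁻¹ strongly. -/
/-!
Write `x = (D* D - z)⁻¹ f`, `xₙ = (Dₙ* Dₙ - z)⁻¹ f`, `u = D x` and `e = xₙ - x ∈ Dom Dₙ`.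
Pairing both resolvent equations with `e` and moving `Dₙ*` across the inner product gives
`‖Dₙ e‖² - z ‖e‖² = ⟪e, D* u - Dₙ* u⟫ - ⟪Dₙ e, Dₙ x - D x⟫`.
Since `z ∉ [0, ∞)` there is `c > 0` with `c (a + b) ≤ |a - z b|` for all `a, b ≥ 0`, so
`c (‖e‖² + ‖Dₙ e‖²)` is at most the right-hand side, and therefore
`‖e‖ ≤ (‖D* u - Dₙ* u‖ + ‖Dₙ x - D x‖) / c → 0`.
-/

open scoped InnerProductSpace

variable {E : Type*} [NormedAddCommGroup E] [InnerProductSpace ℂ E] [CompleteSpace E]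

/-- `R` is the (two-sided) resolvent of the (possibly unbounded) operator `T` at `z`,
i.e. `R = (T - z)⁻¹`. -/
def IsResolvent (T : E →ₗ.[ℂ] E) (z : ℂ) (R : E →L[ℂ] E) : Prop :=
  (∀ f : E, ∃ h : R f ∈ T.domain, T ⟨R f, h⟩ - z • R f = f) ∧
  (∀ x : T.domain, R (T x - z • (x : E)) = (x : E))

/-- `S = D* D` for a densely defined operator `D` with densely defined adjoint. -/
def IsStarComp (D S : E →ₗ.[ℂ] E) : Prop :=
  (∀ x : E, x ∈ S.domain ↔ ∃ h : x ∈ D.domain, D ⟨x, h⟩ ∈ D.adjoint.domain) ∧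
  (∀ (x : E) (hxS : x ∈ S.domain) (hxD : x ∈ D.domain)
      (hDx : D ⟨x, hxD⟩ ∈ D.adjoint.domain),
    S ⟨x, hxS⟩ = D.adjoint ⟨D ⟨x, hxD⟩, hDx⟩)

open Filter

theorem Complex.exists_pos_mul_add_le_norm_sub_mul {z : ℂ} (hz : z.im ≠ 0 ∨ z.re < 0) :
    ∃ c > 0, ∀ a b : ℝ, 0 ≤ a → 0 ≤ b → c * (a + b) ≤ ‖(a : ℂ) - z * b‖ := by
  rcases hz with him | hre
  · have ht : 0 < |z.im| := abs_pos.2 him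
    refine ⟨|z.im| / (|z.im| + 1 + ‖z‖), by positivity, fun a b ha hb => ?_⟩
    have h_im : |z.im| * b ≤ ‖(a : ℂ) - z * b‖ := by
      calc |z.im| * b = |((a : ℂ) - z * b).im| := by
            simp [abs_mul, abs_of_nonneg hb]
        _ ≤ _ := Complex.abs_im_le_norm _
    have h_re : a - ‖z‖ * b ≤ ‖(a : ℂ) - z * b‖ := by
      calc a - ‖z‖ * b = ‖(a : ℂ)‖ - ‖z * b‖ := by
            simp [Complex.norm_real, abs_of_nonneg ha, abs_of_nonneg hb]
        _ ≤ _ := norm_sub_norm_le _ _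
    rw [div_mul_eq_mul_div, div_le_iff₀ (by positivity)]
    nlinarith [norm_nonneg z, norm_nonneg ((a : ℂ) - z * b)]
  · refine ⟨min 1 (-z.re), lt_min one_pos (neg_pos.2 hre), fun a b ha hb => ?_⟩
    calc min 1 (-z.re) * (a + b) ≤ a + -z.re * b := by
          nlinarith [min_le_left 1 (-z.re), min_le_right 1 (-z.re)]
      _ = ((a : ℂ) - z * b).re := by simp [sub_eq_add_neg]
      _ ≤ ‖(a : ℂ) - z * b‖ := Complex.re_le_norm _

theorem le_div_of_mul_sq_add_sq_le {c p q α β : ℝ} (hc : 0 < c) (hp : 0 ≤ p)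
    (hα : 0 ≤ α) (hβ : 0 ≤ β) (h : c * (p ^ 2 + q ^ 2) ≤ p * α + q * β) :
    p ≤ (α + β) / c := by
  obtain ⟨m, hpm, hqm, hm2⟩ : ∃ m, p ≤ m ∧ q ≤ m ∧ m ^ 2 ≤ p ^ 2 + q ^ 2 := by
    rcases le_total p q with h | h
    · exact ⟨q, h, le_rfl, by nlinarith⟩
    · exact ⟨p, le_rfl, h, by nlinarith⟩
  have hm : m * (c * m) ≤ m * (α + β) := by
    nlinarith [mul_le_mul_of_nonneg_right hpm hα, mul_le_mul_of_nonneg_right hqm hβ]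
  rcases (hp.trans hpm).eq_or_lt with hm0 | hm0
  · rw [le_antisymm (hm0 ▸ hpm) hp]
    positivity
  · rw [le_div_iff₀ hc]
    nlinarith [le_of_mul_le_mul_left hm hm0]

namespace IsStarComp

variable {D S : E →ₗ.[ℂ] E}

theorem mem_domain (hS : IsStarComp D S) {x : E} (hx : x ∈ S.domain) : x ∈ D.domain :=
  ((hS.1 x).1 hx).1

theorem apply_mem_adjoint_domain (hS : IsStarComp D S) {x : E} (hx : x ∈ S.domain) :
    D ⟨x, hS.mem_domain hx⟩ ∈ D.adjoint.domain :=
  ((hS.1 x).1 hx).2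

theorem apply_eq_adjoint_apply (hS : IsStarComp D S) (x : S.domain) :
    S x = D.adjoint ⟨D ⟨x, hS.mem_domain x.2⟩, hS.apply_mem_adjoint_domain x.2⟩ :=
  hS.2 x x.2 _ _

theorem inner_apply (hD : Dense (D.domain : Set E)) (hS : IsStarComp D S)
    (y : D.domain) (x : S.domain) :
    ⟪(y : E), S x⟫_ℂ = ⟪D y, D ⟨x, hS.mem_domain x.2⟩⟫_ℂ := by
  rw [hS.apply_eq_adjoint_apply]
  exact ((LinearPMap.adjoint_isFormalAdjoint hD).symm _ _).symm

/-- Applied with `v = D'* D' x` and `u = D' x` for an operator `D'` approximated by `D`, this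
compares the resolvents of `D* D` and `D'* D'`. -/
theorem norm_sub_le_of_apply_sub_smul_eq {z : ℂ} {c : ℝ} (hD : Dense (D.domain : Set E))
    (hS : IsStarComp D S) (hc : 0 < c)
    (hcz : ∀ a b : ℝ, 0 ≤ a → 0 ≤ b → c * (a + b) ≤ ‖(a : ℂ) - z * b‖)
    (x' : S.domain) (x : D.domain) (u : D.adjoint.domain) (v : E)
    (hx' : S x' - z • (x' : E) = v - z • (x : E)) :
    ‖(x' : E) - x‖ ≤ (‖v - D.adjoint u‖ + ‖D x - u‖) / c := by
  set y : D.domain := ⟨x', hS.mem_domain x'.2⟩ - x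
  have hy : (y : E) = x' - x := rfl
  have hDy : D y = D ⟨x', hS.mem_domain x'.2⟩ - D x := map_sub _ _ _
  have hSx' := hS.inner_apply hD y x'
  have hu : ⟪(y : E), D.adjoint u⟫_ℂ = ⟪D y, (u : E)⟫_ℂ :=
    ((LinearPMap.adjoint_isFormalAdjoint hD).symm _ _).symm
  have hx'y := congrArg (fun w => ⟪(y : E), w⟫_ℂ) hx'
  simp only [inner_sub_right, inner_smul_right] at hx'y
  have key : ((‖D y‖ ^ 2 : ℝ) : ℂ) - z * ((‖(y : E)‖ ^ 2 : ℝ) : ℂ)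
      = ⟪(y : E), v - D.adjoint u⟫_ℂ - ⟪D y, D x - u⟫_ℂ := by
    have hsq (w : E) : ((‖w‖ ^ 2 : ℝ) : ℂ) = ⟪w, w⟫_ℂ := by
      exact_mod_cast (inner_self_eq_norm_sq_to_K w).symm
    rw [hsq, hsq]
    have hyy : ⟪(y : E), y⟫_ℂ = ⟪(y : E), x'⟫_ℂ - ⟪(y : E), x⟫_ℂ := by
      rw [← inner_sub_right, hy]
    have hDyy : ⟪D y, D y⟫_ℂ = ⟪D y, D ⟨x', hS.mem_domain x'.2⟩⟫_ℂ - ⟪D y, D x⟫_ℂ := by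
      rw [← inner_sub_right, ← hDy]
    simp only [inner_sub_right]
    linear_combination hx'y - hSx' + hu + hDyy - z * hyy
  rw [← hy]
  refine le_div_of_mul_sq_add_sq_le (q := ‖D y‖) hc (norm_nonneg _) (norm_nonneg _)
    (norm_nonneg _) ?_
  calc c * (‖(y : E)‖ ^ 2 + ‖D y‖ ^ 2)
      ≤ ‖((‖D y‖ ^ 2 : ℝ) : ℂ) - z * ((‖(y : E)‖ ^ 2 : ℝ) : ℂ)‖ := by
        rw [add_comm]; exact hcz _ _ (sq_nonneg _) (sq_nonneg _)
    _ ≤ ‖⟪(y : E), v - D.adjoint u⟫_ℂ‖ + ‖⟪D y, D x - u⟫_ℂ‖ := key ▸ _root_.norm_sub_le _ _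
    _ ≤ ‖(y : E)‖ * ‖v - D.adjoint u‖ + ‖D y‖ * ‖D x - u‖ :=
        add_le_add (norm_inner_le_norm _ _) (norm_inner_le_norm _ _)

end IsStarComp

theorem resolvent_strong_convergence_general
    (D : E →ₗ.[ℂ] E) (Dn : ℕ → E →ₗ.[ℂ] E)
    (hDndense : ∀ n, Dense ((Dn n).domain : Set E))
    (hdom : ∀ n, D.domain ≤ (Dn n).domain)
    (hdomadj : ∀ n, D.adjoint.domain ≤ (Dn n).adjoint.domain)
    (hconv : ∀ x : D.domain,
      Filter.Tendsto (fun n => (Dn n) ⟨(x : E), hdom n x.2⟩) Filter.atTop (nhds (D x)))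
    (hconvadj : ∀ x : D.adjoint.domain,
      Filter.Tendsto (fun n => (Dn n).adjoint ⟨(x : E), hdomadj n x.2⟩)
        Filter.atTop (nhds (D.adjoint x)))
    (S : E →ₗ.[ℂ] E) (Sn : ℕ → E →ₗ.[ℂ] E)
    (hS : IsStarComp D S) (hSn : ∀ n, IsStarComp (Dn n) (Sn n))
    (z : ℂ) (hz : z.im ≠ 0 ∨ z.re < 0)
    (R : E →L[ℂ] E) (hR : IsResolvent S z R)
    (Rn : ℕ → E →L[ℂ] E) (hRn : ∀ n, IsResolvent (Sn n) z (Rn n)) :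
    ∀ f : E, Filter.Tendsto (fun n => Rn n f) Filter.atTop (nhds (R f)) := by
  intro f
  obtain ⟨c, hc, hcz⟩ := Complex.exists_pos_mul_add_le_norm_sub_mul hz
  obtain ⟨hxS, hfx⟩ := hR.1 f
  let x : D.domain := ⟨R f, hS.mem_domain hxS⟩
  let u : D.adjoint.domain := ⟨D x, hS.apply_mem_adjoint_domain hxS⟩
  have hbound (n : ℕ) : ‖Rn n f - R f‖ ≤ (‖D.adjoint u - (Dn n).adjoint ⟨u, hdomadj n u.2⟩‖
      + ‖Dn n ⟨x, hdom n x.2⟩ - D x‖) / c := by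
    obtain ⟨hxnS, hfxn⟩ := (hRn n).1 f
    refine (hSn n).norm_sub_le_of_apply_sub_smul_eq (hDndense n) hc hcz ⟨Rn n f, hxnS⟩
      ⟨x, hdom n x.2⟩ ⟨u, hdomadj n u.2⟩ (D.adjoint u) ?_
    rw [hfxn, ← hS.apply_eq_adjoint_apply ⟨R f, hxS⟩, hfx]
  have hlim : Tendsto (fun n => (‖D.adjoint u - (Dn n).adjoint ⟨u, hdomadj n u.2⟩‖
      + ‖Dn n ⟨x, hdom n x.2⟩ - D x‖) / c) atTop (nhds 0) := by
    simpa using (((hconvadj u).const_sub (D.adjoint u : E)).norm.add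
      ((hconv x).sub_const (D x : E)).norm).div_const c
  exact tendsto_iff_norm_sub_tendsto_zero.2 (squeeze_zero (fun n => norm_nonneg _) hbound hlim)

/-- If `D_n`, `D` are closed densely defined operators with densely defined adjoints,
`Dom D ⊆ Dom D_n`, `Dom D* ⊆ Dom D_n*`, `D_n f → D f` on `Dom D` and `D_n* f → D* f`
on `Dom D*`, then `(D_n* D_n − z)⁻¹ → (D* D − z)⁻¹` strongly for every
`z ∈ ℂ \ [0,∞)`. -/
theorem resolvent_strong_convergence [TopologicalSpace.SeparableSpace E]
    (D : E →ₗ.[ℂ] E) (Dn : ℕ → E →ₗ.[ℂ] E)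
    (hDclosed : D.IsClosed) (hDdense : Dense (D.domain : Set E))
    (hDadjdense : Dense (D.adjoint.domain : Set E))
    (hDnclosed : ∀ n, (Dn n).IsClosed) (hDndense : ∀ n, Dense ((Dn n).domain : Set E))
    (hDnadjdense : ∀ n, Dense ((Dn n).adjoint.domain : Set E))
    (hdom : ∀ n, D.domain ≤ (Dn n).domain)
    (hdomadj : ∀ n, D.adjoint.domain ≤ (Dn n).adjoint.domain)
    (hconv : ∀ x : D.domain,
      Filter.Tendsto (fun n => (Dn n) ⟨(x : E), hdom n x.2⟩) Filter.atTop (nhds (D x)))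
    (hconvadj : ∀ x : D.adjoint.domain,
      Filter.Tendsto (fun n => (Dn n).adjoint ⟨(x : E), hdomadj n x.2⟩)
        Filter.atTop (nhds (D.adjoint x)))
    (S : E →ₗ.[ℂ] E) (Sn : ℕ → E →ₗ.[ℂ] E)
    (hS : IsStarComp D S) (hSn : ∀ n, IsStarComp (Dn n) (Sn n))
    (z : ℂ) (hz : z.im ≠ 0 ∨ z.re < 0)
    (R : E →L[ℂ] E) (hR : IsResolvent S z R)
    (Rn : ℕ → E →L[ℂ] E) (hRn : ∀ n, IsResolvent (Sn n) z (Rn n)) :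
    ∀ f : E, Filter.Tendsto (fun n => Rn n f) Filter.atTop (nhds (R f)) :=
  resolvent_strong_convergence_general D Dn hDndense hdom hdomadj hconv hconvadj S Sn hS hSn z hz R
    hR Rn hRn
end

section
/- Suppose ξ, η are integrable functions (ξ ∈ L¹([0,∞), (1+λ²)⁻¹dλ) supported in [0,∞), η ∈ L¹(ℝ)) and that for all z in a nonempty open subset of (−∞,0), ∫_0^∞ ξ(t)(t − z)⁻² dt = −(2z)⁻¹ ∫_ℝ η(t) ∂_t [t (t² − z)^{-1/2}] dt. Then for all z < 0, ∫_0^∞ ξ(t) [(t − z)⁻¹ − (t + 1)⁻¹] dt = ∫_ℝ η(t) [(t² − z)^{-1/2} − (t² + 1)^{-1/2}] dt. -/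
open MeasureTheory Set Filter Topology

/-!
Replace `z` by a complex variable in the half-plane `Re z < 0`. Both sides become holomorphic
there: differentiation under the integral sign is dominated thanks to
`|t - z| ≥ min(a, 1) (t + 1)` for `t ≥ 0` and `|t² - z| ≥ a` whenever `Re z ≤ -a`. On the real
points of `U` the hypothesis says exactly that the derivative of the difference of the two sides
vanishes; by the identity theorem this derivative vanishes on the whole half-plane, so the
difference is constant there, and it is `0` at `z = -1`.
-/

theorem hasDerivAt_integral_mul_of_bounded {α 𝕜 : Type*} [MeasurableSpace α] [RCLike 𝕜]
    {μ : Measure α} {f : α → 𝕜} (hf : Integrable f μ) {K K' : α → 𝕜 → 𝕜} {s : Set 𝕜} {z₀ : 𝕜}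
    (hs : s ∈ 𝓝 z₀) (hK_meas : ∀ z ∈ s, AEStronglyMeasurable (fun t => K t z) μ)
    (hK'_meas : AEStronglyMeasurable (fun t => K' t z₀) μ) {C C' : ℝ}
    (hK_le : ∀ᵐ t ∂μ, ‖K t z₀‖ ≤ C) (hK'_le : ∀ᵐ t ∂μ, ∀ z ∈ s, ‖K' t z‖ ≤ C')
    (hK_deriv : ∀ᵐ t ∂μ, ∀ z ∈ s, HasDerivAt (K t) (K' t z) z) :
    HasDerivAt (fun z => ∫ t, f t * K t z ∂μ) (∫ t, f t * K' t z₀ ∂μ) z₀ := by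
  refine (hasDerivAt_integral_of_dominated_loc_of_deriv_le (F' := fun z t => f t * K' t z)
    (bound := fun t => ‖f t‖ * C') hs
    (eventually_of_mem hs fun z hz => hf.aestronglyMeasurable.mul (hK_meas z hz))
    (hf.mul_bdd (hK_meas z₀ (mem_of_mem_nhds hs)) hK_le)
    (hf.aestronglyMeasurable.mul hK'_meas) ?_ (hf.norm.mul_const C') ?_).2
  · filter_upwards [hK'_le] with t ht z hz
    rw [norm_mul]
    exact mul_le_mul_of_nonneg_left (ht z hz) (norm_nonneg _)
  · filter_upwards [hK_deriv] with t ht z hz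
    exact (ht z hz).const_mul (f t)

theorem IsOpen.eqOn_const_of_deriv_frequently_eq_zero {E : Type*} [NormedAddCommGroup E]
    [NormedSpace ℂ E] [CompleteSpace E] {Ω : Set ℂ} {F : ℂ → E} (hΩ : IsOpen Ω)
    (hΩc : IsPreconnected Ω) (hF : DifferentiableOn ℂ F Ω) {w₀ w₁ : ℂ} (hw₀ : w₀ ∈ Ω)
    (hw₁ : w₁ ∈ Ω) (hF' : ∃ᶠ w in 𝓝[≠] w₀, deriv F w = 0) : ∀ w ∈ Ω, F w = F w₁ := fun _ hw =>
  hΩ.is_const_of_deriv_eq_zero hΩc hF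
    ((hF.analyticOnNhd hΩ).deriv.eqOn_zero_of_preconnected_of_frequently_eq_zero hΩc hw₀ hF') hw hw₁

theorem frequently_nhdsNE_ofReal {p : ℂ → Prop} {U : Set ℝ} (hU : IsOpen U) {u : ℝ} (hu : u ∈ U)
    (hp : ∀ x ∈ U, p x) : ∃ᶠ w in 𝓝[≠] (u : ℂ), p w := by
  have htend : Tendsto ((↑) : ℝ → ℂ) (𝓝[≠] u) (𝓝[≠] (u : ℂ)) :=
    tendsto_nhdsWithin_of_tendsto_nhds_of_eventually_within _
      (Complex.continuous_ofReal.continuousAt.tendsto.mono_left nhdsWithin_le_nhds)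
      (eventually_nhdsWithin_of_forall fun x hx => by simpa using hx)
  exact htend.frequently
    (eventually_nhdsWithin_of_eventually_nhds (eventually_of_mem (hU.mem_nhds hu) hp)).frequently

theorem sub_re_le_norm_ofReal_sub (x : ℝ) (z : ℂ) : x - z.re ≤ ‖(x : ℂ) - z‖ := by
  simpa using Complex.re_le_norm ((x : ℂ) - z)

-- The weight `1 + t²` sits in the kernel, so that the function integrated against it is the
-- integrable `ξ t / (1 + t²)`.
noncomputable def resolventKernel (t : ℝ) (z : ℂ) : ℂ :=
  (1 + (t : ℂ) ^ 2) * (((t : ℂ) - z)⁻¹ - ((t : ℂ) + 1)⁻¹)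

section Resolvent

variable {t a : ℝ} {z : ℂ}

theorem min_mul_add_one_le_norm_sub (ht : 0 ≤ t) (hz : z.re ≤ -a) :
    min a 1 * (t + 1) ≤ ‖(t : ℂ) - z‖ :=
  calc min a 1 * (t + 1) ≤ t - z.re := by
        nlinarith [min_le_left a 1, min_le_right a 1]
    _ ≤ ‖(t : ℂ) - z‖ := sub_re_le_norm_ofReal_sub t z

theorem norm_one_add_ofReal_sq (t : ℝ) : ‖1 + (t : ℂ) ^ 2‖ = 1 + t ^ 2 := by
  rw [← Complex.ofReal_pow, ← Complex.ofReal_one, ← Complex.ofReal_add,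
    Complex.norm_of_nonneg (by positivity)]

theorem norm_resolventKernel_le (ht : 0 ≤ t) (ha : 0 < a) (hz : z.re ≤ -a) :
    ‖resolventKernel t z‖ ≤ ‖1 + z‖ / min a 1 := by
  have hm : 0 < min a 1 := lt_min ha one_pos
  have hlb := min_mul_add_one_le_norm_sub ht hz
  have htz : (t : ℂ) - z ≠ 0 := norm_pos_iff.1 (lt_of_lt_of_le (by positivity) hlb)
  have ht1 : (t : ℂ) + 1 ≠ 0 := by exact_mod_cast (by linarith : t + 1 ≠ 0)
  have hnorm1 : ‖(t : ℂ) + 1‖ = t + 1 := by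
    rw [← Complex.ofReal_one, ← Complex.ofReal_add, Complex.norm_of_nonneg (by linarith)]
  have hdiff : ((t : ℂ) - z)⁻¹ - ((t : ℂ) + 1)⁻¹ = (1 + z) / (((t : ℂ) - z) * ((t : ℂ) + 1)) := by
    field_simp; ring
  rw [resolventKernel, hdiff, norm_mul, norm_div, norm_mul, norm_one_add_ofReal_sq, hnorm1]
  calc (1 + t ^ 2) * (‖1 + z‖ / (‖(t : ℂ) - z‖ * (t + 1)))
      ≤ (t + 1) ^ 2 * (‖1 + z‖ / (min a 1 * (t + 1) * (t + 1))) := by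
        gcongr
        nlinarith
    _ = ‖1 + z‖ / min a 1 := by field_simp

theorem norm_resolventKernel_deriv_le (ht : 0 ≤ t) (ha : 0 < a) (hz : z.re ≤ -a) :
    ‖(1 + (t : ℂ) ^ 2) * (((t : ℂ) - z) ^ 2)⁻¹‖ ≤ (min a 1 ^ 2)⁻¹ := by
  have hm : 0 < min a 1 := lt_min ha one_pos
  have hlb := min_mul_add_one_le_norm_sub ht hz
  rw [norm_mul, norm_inv, norm_pow, norm_one_add_ofReal_sq]
  calc (1 + t ^ 2) * (‖(t : ℂ) - z‖ ^ 2)⁻¹ ≤ (t + 1) ^ 2 * ((min a 1 * (t + 1)) ^ 2)⁻¹ := by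
        gcongr
        nlinarith
    _ = (min a 1 ^ 2)⁻¹ := by field_simp

theorem hasDerivAt_resolventKernel (ht : 0 ≤ t) (hz : z.re < 0) :
    HasDerivAt (resolventKernel t) ((1 + (t : ℂ) ^ 2) * (((t : ℂ) - z) ^ 2)⁻¹) z := by
  have htz : (t : ℂ) - z ≠ 0 :=
    norm_pos_iff.1 (lt_of_lt_of_le (by linarith) (sub_re_le_norm_ofReal_sub t z))
  have h : HasDerivAt (fun w : ℂ => ((t : ℂ) - w)⁻¹) (((t : ℂ) - z) ^ 2)⁻¹ z := by
    have h₁ : HasDerivAt (fun w : ℂ => (t : ℂ) - w) (-1) z := by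
      simpa using (hasDerivAt_id z).const_sub (t : ℂ)
    exact (h₁.inv htz).congr_deriv (by simp)
  exact (h.sub_const _).const_mul _

end Resolvent

noncomputable def sqrtKernel (t : ℝ) (z : ℂ) : ℂ :=
  ((t : ℂ) ^ 2 - z) ^ (-(1 / 2) : ℂ) - ((t : ℂ) ^ 2 + 1) ^ (-(1 / 2) : ℂ)

section Sqrt

variable {t a : ℝ} {z : ℂ}

theorem norm_sq_sub_cpow_le (ha : 0 < a) (hz : z.re ≤ -a) {y : ℝ} (hy : y ≤ 0) :
    ‖((t : ℂ) ^ 2 - z) ^ (y : ℂ)‖ ≤ a ^ y := by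
  have h := sub_re_le_norm_ofReal_sub (t ^ 2) z
  push_cast at h
  rw [Complex.norm_cpow_real]
  exact Real.rpow_le_rpow_of_nonpos ha (by nlinarith) hy

theorem norm_sqrtKernel_le (ha : 0 < a) (hz : z.re ≤ -a) :
    ‖sqrtKernel t z‖ ≤ a ^ (-(1 / 2) : ℝ) + 1 := by
  have h₁ := norm_sq_sub_cpow_le (t := t) ha hz (y := -(1 / 2)) (by norm_num)
  have h₂ := norm_sq_sub_cpow_le (t := t) one_pos (z := -1) (by simp) (y := -(1 / 2))
    (by norm_num)
  push_cast at h₁ h₂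
  rw [sub_neg_eq_add, Real.one_rpow] at h₂
  exact (norm_sub_le _ _).trans (add_le_add h₁ h₂)

theorem norm_sqrtKernel_deriv_le (ha : 0 < a) (hz : z.re ≤ -a) :
    ‖(1 / 2) * ((t : ℂ) ^ 2 - z) ^ (-(3 / 2) : ℂ)‖ ≤ a ^ (-(3 / 2) : ℝ) := by
  have h := norm_sq_sub_cpow_le (t := t) ha hz (y := -(3 / 2)) (by norm_num)
  push_cast at h
  rw [norm_mul]
  norm_num
  linarith [norm_nonneg (((t : ℂ) ^ 2 - z) ^ (-(3 / 2) : ℂ))]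

theorem hasDerivAt_sqrtKernel (hz : z.re < 0) :
    HasDerivAt (sqrtKernel t) ((1 / 2) * ((t : ℂ) ^ 2 - z) ^ (-(3 / 2) : ℂ)) z := by
  have hslit : (t : ℂ) ^ 2 - z ∈ Complex.slitPlane := by
    left
    simp only [Complex.sub_re, ← Complex.ofReal_pow, Complex.ofReal_re]
    nlinarith
  have h₁ : HasDerivAt (fun w : ℂ => (t : ℂ) ^ 2 - w) (-1) z := by
    simpa using (hasDerivAt_id z).const_sub ((t : ℂ) ^ 2)
  refine ((h₁.cpow_const (c := -(1 / 2)) hslit).sub_const _).congr_deriv ?_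
  rw [show (-(1 / 2) - 1 : ℂ) = -(3 / 2) by norm_num]
  ring

end Sqrt

theorem inv_sqrt_eq_rpow {x : ℝ} (hx : 0 ≤ x) : (√x)⁻¹ = x ^ (-(1 / 2) : ℝ) := by
  rw [Real.sqrt_eq_rpow, Real.rpow_neg hx]

theorem hasDerivAt_div_sqrt_sq_sub {u : ℝ} (hu : u < 0) (t : ℝ) :
    HasDerivAt (fun s => s / √(s ^ 2 - u)) (-u * (t ^ 2 - u) ^ (-(3 / 2) : ℝ)) t := by
  have hpos : ∀ s : ℝ, 0 < s ^ 2 - u := fun s => by nlinarith [sq_nonneg s]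
  have hfun : (fun s => s / √(s ^ 2 - u)) = fun s => s * (s ^ 2 - u) ^ (-(1 / 2) : ℝ) := by
    funext s
    rw [div_eq_mul_inv, inv_sqrt_eq_rpow (hpos s).le]
  have hw : HasDerivAt (fun s : ℝ => s ^ 2 - u) (2 * t) t := by
    simpa using (hasDerivAt_pow 2 t).sub_const u
  rw [hfun]
  refine ((hasDerivAt_id t).mul (hw.rpow_const (Or.inl (hpos t).ne'))).congr_deriv ?_
  have hsplit : (t ^ 2 - u) ^ (-(1 / 2) : ℝ) = (t ^ 2 - u) * (t ^ 2 - u) ^ (-(3 / 2) : ℝ) := by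
    rw [← Real.rpow_one_add' (hpos t).le (by norm_num)]
    norm_num
  rw [hsplit, show (-(1 / 2) - 1 : ℝ) = -(3 / 2) by norm_num]
  simp only [id]
  ring

theorem ofReal_sq_sub_cpow (t u y : ℝ) (hu : u ≤ 0) :
    ((t : ℂ) ^ 2 - u) ^ (y : ℂ) = ((t ^ 2 - u) ^ y : ℝ) := by
  rw [Complex.ofReal_cpow (by nlinarith [sq_nonneg t])]
  push_cast
  rfl

noncomputable def resolventIntegral (ξ : ℝ → ℝ) (z : ℂ) : ℂ :=
  ∫ t in Ioi 0, ((ξ t / (1 + t ^ 2) : ℝ) : ℂ) * resolventKernel t z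

noncomputable def sqrtIntegral (η : ℝ → ℝ) (z : ℂ) : ℂ :=
  ∫ t, (η t : ℂ) * sqrtKernel t z

theorem hasDerivAt_resolventIntegral {ξ : ℝ → ℝ}
    (hξ : IntegrableOn (fun t => ξ t / (1 + t ^ 2)) (Ioi 0)) {z : ℂ} (hz : z.re < 0) :
    HasDerivAt (resolventIntegral ξ) (∫ t in Ioi 0,
      ((ξ t / (1 + t ^ 2) : ℝ) : ℂ) * ((1 + (t : ℂ) ^ 2) * (((t : ℂ) - z) ^ 2)⁻¹)) z := by
  obtain ⟨a, ha, hza⟩ : ∃ a : ℝ, 0 < a ∧ z.re < -a := ⟨-z.re / 2, by linarith, by linarith⟩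
  have hs : {w : ℂ | w.re < -a} ∈ 𝓝 z :=
    (isOpen_lt Complex.continuous_re continuous_const).mem_nhds hza
  have hpos : ∀ᵐ t ∂volume.restrict (Ioi (0 : ℝ)), 0 ≤ t :=
    (ae_restrict_mem measurableSet_Ioi).mono fun t ht => le_of_lt ht
  refine hasDerivAt_integral_mul_of_bounded hξ.ofReal hs (K := resolventKernel)
    (K' := fun t w => (1 + (t : ℂ) ^ 2) * (((t : ℂ) - w) ^ 2)⁻¹)
    (fun w _ => by unfold resolventKernel; fun_prop) (by fun_prop) (C := ‖1 + z‖ / min a 1)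
    (C' := (min a 1 ^ 2)⁻¹) ?_ ?_ ?_
  · filter_upwards [hpos] with t ht using norm_resolventKernel_le ht ha hza.le
  · filter_upwards [hpos] with t ht w hw using norm_resolventKernel_deriv_le ht ha (le_of_lt hw)
  · filter_upwards [hpos] with t ht w hw using
      hasDerivAt_resolventKernel ht (lt_trans hw (by linarith))

theorem hasDerivAt_sqrtIntegral {η : ℝ → ℝ} (hη : Integrable η) {z : ℂ} (hz : z.re < 0) :
    HasDerivAt (sqrtIntegral η)
      (∫ t, (η t : ℂ) * ((1 / 2) * ((t : ℂ) ^ 2 - z) ^ (-(3 / 2) : ℂ))) z := by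
  obtain ⟨a, ha, hza⟩ : ∃ a : ℝ, 0 < a ∧ z.re < -a := ⟨-z.re / 2, by linarith, by linarith⟩
  have hs : {w : ℂ | w.re < -a} ∈ 𝓝 z :=
    (isOpen_lt Complex.continuous_re continuous_const).mem_nhds hza
  refine hasDerivAt_integral_mul_of_bounded hη.ofReal hs (K := sqrtKernel)
    (K' := fun t w => (1 / 2) * ((t : ℂ) ^ 2 - w) ^ (-(3 / 2) : ℂ))
    (fun w _ => by unfold sqrtKernel; fun_prop) (Measurable.aestronglyMeasurable (by fun_prop))
    (C := a ^ (-(1 / 2) : ℝ) + 1) (C' := a ^ (-(3 / 2) : ℝ)) ?_ ?_ ?_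
  · exact ae_of_all _ fun t => norm_sqrtKernel_le ha hza.le
  · exact ae_of_all _ fun t w hw => norm_sqrtKernel_deriv_le ha (le_of_lt hw)
  · exact ae_of_all _ fun t w hw => hasDerivAt_sqrtKernel (lt_trans hw (by linarith))

theorem resolventIntegral_ofReal (ξ : ℝ → ℝ) (u : ℝ) :
    resolventIntegral ξ u = ((∫ t in Ioi 0, ξ t * ((t - u)⁻¹ - (t + 1)⁻¹) : ℝ) : ℂ) := by
  rw [resolventIntegral, ← integral_complex_ofReal]
  refine integral_congr_ae (ae_of_all _ fun t => ?_)
  have h : (1 + (t : ℂ) ^ 2) ≠ 0 := by exact_mod_cast (by positivity : (1 + t ^ 2 : ℝ) ≠ 0)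
  simp only [resolventKernel]
  push_cast
  field_simp

theorem sqrtIntegral_ofReal (η : ℝ → ℝ) {u : ℝ} (hu : u ≤ 0) :
    sqrtIntegral η u = ((∫ t, η t * ((√(t ^ 2 - u))⁻¹ - (√(t ^ 2 + 1))⁻¹) : ℝ) : ℂ) := by
  rw [sqrtIntegral, ← integral_complex_ofReal]
  refine integral_congr_ae (ae_of_all _ fun t => ?_)
  have h₁ := ofReal_sq_sub_cpow t u (-(1 / 2)) hu
  have h₂ := ofReal_sq_sub_cpow t (-1) (-(1 / 2)) (by norm_num)
  push_cast at h₁ h₂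
  simp only [sub_neg_eq_add] at h₂
  simp only [sqrtKernel, h₁, h₂, inv_sqrt_eq_rpow (by nlinarith [sq_nonneg t] : 0 ≤ t ^ 2 - u),
    inv_sqrt_eq_rpow (by positivity : (0 : ℝ) ≤ t ^ 2 + 1)]
  push_cast
  rfl

theorem deriv_resolventIntegral_ofReal {ξ : ℝ → ℝ}
    (hξ : IntegrableOn (fun t => ξ t / (1 + t ^ 2)) (Ioi 0)) {u : ℝ} (hu : u < 0) :
    deriv (resolventIntegral ξ) u = ((∫ t in Ioi 0, ξ t / (t - u) ^ 2 : ℝ) : ℂ) := by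
  rw [(hasDerivAt_resolventIntegral hξ (by simpa using hu)).deriv, ← integral_complex_ofReal]
  refine integral_congr_ae (ae_of_all _ fun t => ?_)
  have h : (1 + (t : ℂ) ^ 2) ≠ 0 := by exact_mod_cast (by positivity : (1 + t ^ 2 : ℝ) ≠ 0)
  push_cast
  field_simp

theorem deriv_sqrtIntegral_ofReal {η : ℝ → ℝ} (hη : Integrable η) {u : ℝ} (hu : u < 0) :
    deriv (sqrtIntegral η) u = (((1 / 2) * ∫ t, η t * (t ^ 2 - u) ^ (-(3 / 2) : ℝ) : ℝ) : ℂ) := by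
  rw [(hasDerivAt_sqrtIntegral hη (by simpa using hu)).deriv, ← integral_const_mul,
    ← integral_complex_ofReal]
  refine integral_congr_ae (ae_of_all _ fun t => ?_)
  have h := ofReal_sq_sub_cpow t u (-(3 / 2)) hu.le
  push_cast at h ⊢
  rw [h]
  ring

theorem integral_mul_deriv_div_sqrt_sq_sub (η : ℝ → ℝ) {u : ℝ} (hu : u < 0) :
    ∫ t, η t * deriv (fun s => s / √(s ^ 2 - u)) t =
      -u * ∫ t, η t * (t ^ 2 - u) ^ (-(3 / 2) : ℝ) := by
  simp_rw [(hasDerivAt_div_sqrt_sq_sub hu _).deriv, ← integral_const_mul]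
  congr 1 with t
  ring

/-- If the differentiated trace identity
`∫_0^∞ ξ(t)(t − z)⁻² dt = −(2z)⁻¹ ∫ η(t) ∂_t[t(t² − z)^{-1/2}] dt` holds on a nonempty
open subset of `(−∞, 0)`, then the integrated identity
`∫_0^∞ ξ(t)[(t − z)⁻¹ − (t + 1)⁻¹] dt = ∫ η(t)[(t² − z)^{-1/2} − (t² + 1)^{-1/2}] dt`
holds for all `z < 0`. -/
theorem integrated_trace_identity
    (ξ η : ℝ → ℝ)
    (hξ : MeasureTheory.IntegrableOn (fun t => ξ t / (1 + t ^ 2)) (Set.Ici 0))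
    (hη : MeasureTheory.Integrable η)
    (U : Set ℝ) (hUopen : IsOpen U) (hUne : U.Nonempty) (hUsub : U ⊆ Set.Iio 0)
    (hid : ∀ z ∈ U,
      ∫ t in Set.Ioi (0:ℝ), ξ t / (t - z) ^ 2 =
        -(2 * z)⁻¹ * ∫ t, η t * deriv (fun s => s / Real.sqrt (s ^ 2 - z)) t) :
    ∀ z < (0:ℝ),
      ∫ t in Set.Ioi (0:ℝ), ξ t * ((t - z)⁻¹ - (t + 1)⁻¹) =
        ∫ t, η t * ((Real.sqrt (t ^ 2 - z))⁻¹ - (Real.sqrt (t ^ 2 + 1))⁻¹) := by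
  intro z hz
  have hξ' := hξ.mono_set Ioi_subset_Ici_self
  set Ω : Set ℂ := {w | w.re < 0}
  have hΩ : IsOpen Ω := isOpen_lt Complex.continuous_re continuous_const
  set F : ℂ → ℂ := fun w => resolventIntegral ξ w - sqrtIntegral η w
  have hF : DifferentiableOn ℂ F Ω := fun w hw =>
    ((hasDerivAt_resolventIntegral hξ' hw).sub (hasDerivAt_sqrtIntegral hη hw))
      |>.differentiableAt.differentiableWithinAt
  have hF'U : ∀ u ∈ U, deriv F u = 0 := by
    intro u hu
    have hu0 : u < 0 := hUsub hu
    have hu0' : (u : ℂ).re < 0 := by simpa using hu0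
    rw [deriv_fun_sub (hasDerivAt_resolventIntegral hξ' hu0').differentiableAt
      (hasDerivAt_sqrtIntegral hη hu0').differentiableAt, deriv_resolventIntegral_ofReal hξ' hu0,
      deriv_sqrtIntegral_ofReal hη hu0, hid u hu, integral_mul_deriv_div_sqrt_sq_sub η hu0]
    have hu' : (u : ℂ) ≠ 0 := by exact_mod_cast hu0.ne
    push_cast
    field_simp
    ring
  obtain ⟨u₀, hu₀⟩ := hUne
  have hconst := hΩ.eqOn_const_of_deriv_frequently_eq_zero (convex_halfSpace_re_lt 0).isPreconnected
    hF (w₀ := u₀) (by simpa [Ω] using hUsub hu₀) (w₁ := -1) (by simp [Ω])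
    (frequently_nhdsNE_ofReal hUopen hu₀ hF'U) z (by simpa [Ω] using hz)
  have hF₁ : F (-1) = 0 := by
    simp [F, resolventIntegral, resolventKernel, sqrtIntegral, sqrtKernel]
  rw [hF₁, sub_eq_zero, resolventIntegral_ofReal, sqrtIntegral_ofReal η hz.le] at hconst
  exact_mod_cast hconst
end

section
/- Let V : ℝ → Matrix n n ℂ be continuous with V(t) = 0 for all |t| ≥ R, and let z < 0, κ = √(−z) > 0. Then the integral equation F(t) = e^{-κ t} I + κ⁻¹ ∫_t^∞ sinh(κ(s − t)) V(s) F(s) ds has a unique continuous matrix solution F on ℝ, F is twice continuously differentiable, satisfies −F'' + V F = z F, and F(t) = e^{-κ t} I for t ≥ R. -/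
attribute [local instance] Matrix.frobeniusNormedAddCommGroup Matrix.frobeniusNormedSpace

/-!
Writing `sinh (κ (s - t))` and `cosh (κ (s - t))` as combinations of `e^{±κ s} e^{∓κ t}` reduces
the derivatives of `t ↦ ∫_t^∞ sinh (κ (s - t)) W(s) ds` and `t ↦ ∫_t^∞ cosh (κ (s - t)) W(s) ds` to
the fundamental theorem of calculus; differentiating the integral equation twice then shows that
every continuous solution is `C²` with `F'' = κ² F + V F`.

Since `V` vanishes outside `[a, b]`, the equation only sees `F` on `[a, b]`, and there the integral
operator `T` satisfies the Volterra estimate `‖T f t - T g t‖ ≤ L ∫_t^b ‖f - g‖`. Iterating it,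
`T^[k]` is `(L (b - a))^k / k!`-Lipschitz, so some iterate is a contraction and `T` has a unique
fixed point; the equation itself extends it uniquely from `[a, b]` to `ℝ`.
-/

open MeasureTheory Set Function
open scoped Nat

theorem mul_integral_mul_sub_pow_div_factorial (L b t : ℝ) (k : ℕ) :
    L * ∫ s in t..b, (L * (b - s)) ^ k / k ! = (L * (b - t)) ^ (k + 1) / (k + 1)! := by
  simp_rw [mul_pow, mul_div_assoc]
  rw [intervalIntegral.integral_const_mul, intervalIntegral.integral_div,
    intervalIntegral.integral_comp_sub_left (fun x => x ^ k), integral_pow, sub_self,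
    zero_pow k.succ_ne_zero, sub_zero, Nat.factorial_succ]
  push_cast
  field_simp
  ring

section Volterra

variable {E : Type*} [NormedAddCommGroup E] {a b : ℝ} (hab : a ≤ b)
  {T : C(Icc a b, E) → C(Icc a b, E)} {L : ℝ} (hL : 0 ≤ L)
  (hT : ∀ f g (t : Icc a b),
    ‖T f t - T g t‖ ≤ L * ∫ s in t..b, ‖IccExtend hab f s - IccExtend hab g s‖)
include hL hT

theorem norm_iterate_apply_sub_le (f g : C(Icc a b, E)) (k : ℕ) (t : Icc a b) :
    ‖(T^[k] f) t - (T^[k] g) t‖ ≤ (L * (b - t)) ^ k / k ! * dist f g := by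
  induction k generalizing t with
  | zero => simpa [← dist_eq_norm] using ContinuousMap.dist_apply_le_dist t
  | succ k ih =>
    rw [iterate_succ_apply', iterate_succ_apply']
    calc _ ≤ L * ∫ s in t..b, ‖IccExtend hab (T^[k] f) s - IccExtend hab (T^[k] g) s‖ := hT _ _ t
      _ ≤ L * ∫ s in t..b, (L * (b - s)) ^ k / k ! * dist f g := by
        gcongr
        apply intervalIntegral.integral_mono_on t.2.2
        · exact (((ContinuousMap.IccExtend hab _).continuous.sub
            (ContinuousMap.IccExtend hab _).continuous).norm).intervalIntegrable _ _
        · exact Continuous.intervalIntegrable (by fun_prop) _ _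
        · intro s hs
          have hs' : s ∈ Icc a b := ⟨t.2.1.trans hs.1, hs.2⟩
          simpa only [IccExtend_of_mem hab _ hs'] using ih ⟨s, hs'⟩
      _ = (L * (b - t)) ^ (k + 1) / (k + 1)! * dist f g := by
        rw [intervalIntegral.integral_mul_const, ← mul_assoc,
          mul_integral_mul_sub_pow_div_factorial]

theorem existsUnique_isFixedPt_of_norm_sub_le_integral [CompleteSpace E] :
    ∃! f, IsFixedPt T f := by
  obtain ⟨k, hk⟩ := (FloorSemiring.tendsto_pow_div_factorial_atTop (L * (b - a))).eventually
    (gt_mem_nhds one_pos) |>.exists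
  have hq : 0 ≤ (L * (b - a)) ^ k / k ! := by
    have : 0 ≤ b - a := sub_nonneg.2 hab
    positivity
  have hcontr : ContractingWith (⟨_, hq⟩ : NNReal) T^[k] := by
    refine ⟨hk, LipschitzWith.of_dist_le_mul fun f g => ?_⟩
    refine (ContinuousMap.dist_le (by positivity)).2 fun t => ?_
    rw [dist_eq_norm]
    refine (norm_iterate_apply_sub_le hab hL hT f g k t).trans ?_
    show _ ≤ (L * (b - a)) ^ k / k ! * dist f g
    gcongr
    · exact mul_nonneg hL (sub_nonneg.2 t.2.2)
    · exact t.2.1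
  have : Nonempty C(Icc a b, E) := ⟨0⟩
  exact ⟨_, hcontr.isFixedPt_fixedPoint_iterate,
    fun g hg => hcontr.fixedPoint_unique' (hg.iterate k) hcontr.fixedPoint_isFixedPt⟩

end Volterra

theorem hasDerivAt_exp_neg_mul (c t : ℝ) :
    HasDerivAt (fun u => Real.exp (-(c * u))) (-(c * Real.exp (-(c * t)))) t := by
  simpa [mul_comm] using ((hasDerivAt_id t).const_mul c).neg.exp

section Kernel

variable {E : Type*} [NormedAddCommGroup E] [NormedSpace ℝ E]

theorem hasDerivAt_integral_Ioi [CompleteSpace E] {g : ℝ → E} (hg : Continuous g)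
    (hgi : Integrable g) (t : ℝ) :
    HasDerivAt (fun u => ∫ s in Ioi u, g s) (-g t) t := by
  have hsplit :
      (fun u => ∫ s in Ioi u, g s) = fun u => (∫ s in Ioi 0, g s) - ∫ s in 0..u, g s := by
    ext u
    rw [← intervalIntegral.integral_interval_add_Ioi hgi.integrableOn hgi.integrableOn,
      intervalIntegral.integral_symm]
    abel
  rw [hsplit]
  exact (hg.integral_hasStrictDerivAt 0 t).hasDerivAt.const_sub _

variable {W : ℝ → E} (hW : Continuous W) (hWc : HasCompactSupport W)
include hW hWc

theorem integrable_smul_of_hasCompactSupport {f : ℝ → ℝ} (hf : Continuous f) :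
    Integrable fun s => f s • W s :=
  (hf.smul hW).integrable_of_hasCompactSupport hWc.smul_left

theorem integral_Ioi_sinh_mul_sub (κ u : ℝ) :
    ∫ s in Ioi u, Real.sinh (κ * (s - u)) • W s = (2 : ℝ)⁻¹ •
      ((∫ s in Ioi u, Real.exp (κ * (s - u)) • W s) -
        ∫ s in Ioi u, Real.exp (-κ * (s - u)) • W s) := by
  rw [← integral_sub (integrable_smul_of_hasCompactSupport hW hWc (by fun_prop)).integrableOn
    (integrable_smul_of_hasCompactSupport hW hWc (by fun_prop)).integrableOn, ← integral_smul]
  congr 1 with s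
  rw [Real.sinh_eq, neg_mul]
  module

theorem integral_Ioi_cosh_mul_sub (κ u : ℝ) :
    ∫ s in Ioi u, Real.cosh (κ * (s - u)) • W s = (2 : ℝ)⁻¹ •
      ((∫ s in Ioi u, Real.exp (κ * (s - u)) • W s) +
        ∫ s in Ioi u, Real.exp (-κ * (s - u)) • W s) := by
  rw [← integral_add (integrable_smul_of_hasCompactSupport hW hWc (by fun_prop)).integrableOn
    (integrable_smul_of_hasCompactSupport hW hWc (by fun_prop)).integrableOn, ← integral_smul]
  congr 1 with s
  rw [Real.cosh_eq, neg_mul]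
  module

variable [CompleteSpace E]

theorem hasDerivAt_integral_Ioi_exp_mul_sub (c t : ℝ) :
    HasDerivAt (fun u => ∫ s in Ioi u, Real.exp (c * (s - u)) • W s)
      (-(c • ∫ s in Ioi t, Real.exp (c * (s - t)) • W s) - W t) t := by
  have hfactor : ∀ u, ∫ s in Ioi u, Real.exp (c * (s - u)) • W s
      = Real.exp (-(c * u)) • ∫ s in Ioi u, Real.exp (c * s) • W s := fun u => by
    rw [← integral_smul]
    congr 1 with s
    rw [smul_smul, ← Real.exp_add]
    ring_nf
  have hexp : Continuous fun s => Real.exp (c * s) := by fun_prop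
  have hI : HasDerivAt (fun u => ∫ s in Ioi u, Real.exp (c * s) • W s)
      (-(Real.exp (c * t) • W t)) t :=
    hasDerivAt_integral_Ioi (hexp.smul hW) (integrable_smul_of_hasCompactSupport hW hWc hexp) t
  rw [funext hfactor, hfactor]
  refine ((hasDerivAt_exp_neg_mul c t).smul hI).congr_deriv ?_
  rw [smul_neg, smul_smul, ← Real.exp_add, neg_add_cancel, Real.exp_zero, one_smul, smul_smul]
  module

theorem hasDerivAt_integral_Ioi_sinh_mul_sub (κ t : ℝ) :
    HasDerivAt (fun u => ∫ s in Ioi u, Real.sinh (κ * (s - u)) • W s)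
      (-(κ • ∫ s in Ioi t, Real.cosh (κ * (s - t)) • W s)) t := by
  rw [funext (integral_Ioi_sinh_mul_sub hW hWc κ), integral_Ioi_cosh_mul_sub hW hWc]
  refine (((hasDerivAt_integral_Ioi_exp_mul_sub hW hWc κ t).sub
    (hasDerivAt_integral_Ioi_exp_mul_sub hW hWc (-κ) t)).const_smul _).congr_deriv ?_
  module

theorem hasDerivAt_integral_Ioi_cosh_mul_sub (κ t : ℝ) :
    HasDerivAt (fun u => ∫ s in Ioi u, Real.cosh (κ * (s - u)) • W s)
      (-(κ • ∫ s in Ioi t, Real.sinh (κ * (s - t)) • W s) - W t) t := by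
  rw [funext (integral_Ioi_cosh_mul_sub hW hWc κ), integral_Ioi_sinh_mul_sub hW hWc]
  refine (((hasDerivAt_integral_Ioi_exp_mul_sub hW hWc κ t).add
    (hasDerivAt_integral_Ioi_exp_mul_sub hW hWc (-κ) t)).const_smul _).congr_deriv ?_
  module

end Kernel

section JostRHS

variable {E : Type*} [NormedAddCommGroup E] [NormedSpace ℝ E]

noncomputable def jostRHS (κ : ℝ) (c : E) (W : ℝ → E) (t : ℝ) : E :=
  Real.exp (-(κ * t)) • c + κ⁻¹ • ∫ s in Ioi t, Real.sinh (κ * (s - t)) • W s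

noncomputable def jostRHSDeriv (κ : ℝ) (c : E) (W : ℝ → E) (t : ℝ) : E :=
  -(κ * Real.exp (-(κ * t))) • c - ∫ s in Ioi t, Real.cosh (κ * (s - t)) • W s

variable {κ t : ℝ} {c : E} {W : ℝ → E}

theorem jostRHS_of_forall_gt (hW : ∀ s, t < s → W s = 0) :
    jostRHS κ c W t = Real.exp (-(κ * t)) • c := by
  rw [jostRHS, setIntegral_eq_zero_of_forall_eq_zero fun s hs => by rw [hW s hs, smul_zero],
    smul_zero, add_zero]

theorem norm_jostRHS_sub_jostRHS_le (hκ : 0 < κ) {W₁ W₂ : ℝ → E} (hW₁ : Continuous W₁)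
    (hW₁c : HasCompactSupport W₁) (hW₂ : Continuous W₂) (hW₂c : HasCompactSupport W₂) {b : ℝ}
    (htb : t ≤ b) (hb : ∀ s, b < s → W₁ s = W₂ s) :
    ‖jostRHS κ c W₁ t - jostRHS κ c W₂ t‖
      ≤ κ⁻¹ * Real.sinh (κ * (b - t)) * ∫ s in t..b, ‖W₁ s - W₂ s‖ := by
  have hdiff : jostRHS κ c W₁ t - jostRHS κ c W₂ t
      = κ⁻¹ • ∫ s in Ioc t b, Real.sinh (κ * (s - t)) • (W₁ s - W₂ s) := by
    rw [jostRHS, jostRHS, add_sub_add_left_eq_sub, ← smul_sub,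
      ← integral_sub (integrable_smul_of_hasCompactSupport hW₁ hW₁c (by fun_prop)).integrableOn
        (integrable_smul_of_hasCompactSupport hW₂ hW₂c (by fun_prop)).integrableOn,
      ← setIntegral_eq_of_subset_of_forall_sdiff_eq_zero measurableSet_Ioi Ioc_subset_Ioi_self]
    · simp_rw [smul_sub]
    · intro s hs
      rw [hb s (lt_of_not_ge fun h => hs.2 ⟨hs.1, h⟩), smul_sub, sub_self]
  rw [hdiff, norm_smul, norm_inv, Real.norm_of_nonneg hκ.le, mul_assoc,
    intervalIntegral.integral_of_le htb, ← integral_const_mul]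
  gcongr
  refine norm_integral_le_of_norm_le (Continuous.integrableOn_Ioc (by fun_prop))
    (ae_restrict_of_forall_mem measurableSet_Ioc fun s hs => ?_)
  rw [norm_smul, Real.norm_of_nonneg (Real.sinh_nonneg_iff.2 (by nlinarith [hs.1]))]
  gcongr
  exact Real.sinh_le_sinh.2 (by nlinarith [hs.2])

variable [CompleteSpace E] (hW : Continuous W) (hWc : HasCompactSupport W)
include hW hWc

theorem hasDerivAt_jostRHS (hκ : κ ≠ 0) (t : ℝ) :
    HasDerivAt (jostRHS κ c W) (jostRHSDeriv κ c W t) t := by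
  refine (((hasDerivAt_exp_neg_mul κ t).smul_const c).add
    ((hasDerivAt_integral_Ioi_sinh_mul_sub hW hWc κ t).const_smul κ⁻¹)).congr_deriv ?_
  rw [jostRHSDeriv, smul_neg, smul_smul, inv_mul_cancel₀ hκ, one_smul, sub_eq_add_neg]

theorem hasDerivAt_jostRHSDeriv (hκ : κ ≠ 0) (t : ℝ) :
    HasDerivAt (jostRHSDeriv κ c W) (κ ^ 2 • jostRHS κ c W t + W t) t := by
  refine ((((hasDerivAt_exp_neg_mul κ t).const_mul κ).neg.smul_const c).sub
    (hasDerivAt_integral_Ioi_cosh_mul_sub hW hWc κ t)).congr_deriv ?_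
  rw [jostRHS, smul_add, smul_smul, smul_smul, pow_two, mul_assoc κ κ κ⁻¹, mul_inv_cancel₀ hκ,
    mul_one]
  module

theorem continuous_jostRHS (hκ : κ ≠ 0) : Continuous (jostRHS κ c W) :=
  continuous_iff_continuousAt.2 fun t => (hasDerivAt_jostRHS hW hWc hκ t).continuousAt

end JostRHS

section Jost

variable {A : Type*} [NormedRing A] [NormedAlgebra ℝ A] {V : ℝ → A} {κ a b M : ℝ}

theorem norm_jostRHS_mul_sub_jostRHS_mul_le (hV : Continuous V) (hVc : HasCompactSupport V)
    (hVb : ∀ s, b < s → V s = 0) (hM : ∀ s, ‖V s‖ ≤ M) (hκ : 0 < κ) (c : A) {F G : ℝ → A}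
    (hF : Continuous F) (hG : Continuous G) {t : ℝ} (ht : t ∈ Icc a b) :
    ‖jostRHS κ c (fun s => V s * F s) t - jostRHS κ c (fun s => V s * G s) t‖
      ≤ κ⁻¹ * Real.sinh (κ * (b - a)) * M * ∫ s in t..b, ‖F s - G s‖ := by
  refine (norm_jostRHS_sub_jostRHS_le (W₁ := fun s => V s * F s) (W₂ := fun s => V s * G s) hκ
    (hV.mul hF) hVc.mul_right (hV.mul hG) hVc.mul_right ht.2
    fun s hs => by rw [hVb s hs, zero_mul, zero_mul]).trans ?_
  have hVFG : ∫ s in t..b, ‖V s * F s - V s * G s‖ ≤ M * ∫ s in t..b, ‖F s - G s‖ := by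
    rw [← intervalIntegral.integral_const_mul]
    refine intervalIntegral.integral_mono_on ht.2
      (Continuous.intervalIntegrable (by fun_prop) _ _)
      (Continuous.intervalIntegrable (by fun_prop) _ _) fun s _ => ?_
    rw [← mul_sub]
    exact (norm_mul_le _ _).trans (by gcongr; exact hM s)
  rw [mul_assoc _ M]
  exact mul_le_mul (by gcongr; exact Real.sinh_le_sinh.2 (by nlinarith [ht.1])) hVFG
    (intervalIntegral.integral_nonneg ht.2 fun _ _ => norm_nonneg _)
    (mul_nonneg (inv_nonneg.2 hκ.le) (Real.sinh_nonneg_iff.2 (by nlinarith [ht.1, ht.2])))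

theorem existsUnique_continuous_eq_jostRHS [CompleteSpace A] (hV : Continuous V) (hab : a ≤ b)
    (hVab : ∀ s ∉ Icc a b, V s = 0) (hκ : 0 < κ) (c : A) :
    ∃! F : ℝ → A, Continuous F ∧ ∀ t, F t = jostRHS κ c (fun s => V s * F s) t := by
  have hVc : HasCompactSupport V := HasCompactSupport.intro isCompact_Icc hVab
  obtain ⟨M, hM⟩ := hV.bounded_above_of_compact_support hVc
  have hVb : ∀ s, b < s → V s = 0 := fun s hs => hVab s fun h => hs.not_ge h.2
  have hVF : ∀ {F G : ℝ → A}, EqOn F G (Icc a b) →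
      (fun s => V s * F s) = fun s => V s * G s := fun h => funext fun s => by
    by_cases hs : s ∈ Icc a b
    · rw [h hs]
    · rw [hVab s hs, zero_mul, zero_mul]
  have hcont (f : C(Icc a b, A)) :
      Continuous (jostRHS κ c fun s => V s * IccExtend hab f s) :=
    continuous_jostRHS (hV.mul (ContinuousMap.IccExtend hab f).continuous) hVc.mul_right hκ.ne'
  let T (f : C(Icc a b, A)) : C(Icc a b, A) := (ContinuousMap.mk _ (hcont f)).restrict (Icc a b)
  have hT : ∀ f g (t : Icc a b), ‖T f t - T g t‖
      ≤ κ⁻¹ * Real.sinh (κ * (b - a)) * M * ∫ s in t..b, ‖IccExtend hab f s - IccExtend hab g s‖ :=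
    fun f g t => norm_jostRHS_mul_sub_jostRHS_mul_le hV hVc hVb hM hκ c
      (ContinuousMap.IccExtend hab f).continuous (ContinuousMap.IccExtend hab g).continuous t.2
  have hL : 0 ≤ κ⁻¹ * Real.sinh (κ * (b - a)) * M := by
    have : 0 ≤ M := (norm_nonneg _).trans (hM 0)
    have : 0 ≤ Real.sinh (κ * (b - a)) := Real.sinh_nonneg_iff.2 (by nlinarith)
    positivity
  obtain ⟨f, hf, hf_unique⟩ := existsUnique_isFixedPt_of_norm_sub_le_integral hab hL hT
  have hFf : EqOn (jostRHS κ c fun s => V s * IccExtend hab f s) (IccExtend hab f) (Icc a b) :=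
    fun s hs => by rw [IccExtend_of_mem hab f hs]; exact congrArg (· ⟨s, hs⟩) hf
  refine ⟨_, ⟨hcont f, fun t => by rw [hVF hFf]⟩, fun G ⟨hGc, hG⟩ => ?_⟩
  let g : C(Icc a b, A) := ⟨fun t => G t, by fun_prop⟩
  have hGg : EqOn G (IccExtend hab g) (Icc a b) := fun s hs => by
    rw [IccExtend_of_mem hab g hs]; rfl
  have hg : IsFixedPt T g := ContinuousMap.ext fun t => by
    change jostRHS κ c (fun s => V s * IccExtend hab g s) t = G t
    rw [← hVF hGg, ← hG]
  funext t
  rw [hG t, hVF hGg, hf_unique g hg]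

end Jost

/-- Jost solutions for a compactly supported continuous matrix potential: for `z < 0` and
`κ = √(−z)`, the Volterra integral equation
`F(t) = e^{-κt} I + κ⁻¹ ∫_t^∞ sinh(κ(s − t)) V(s) F(s) ds` has a unique continuous
solution `F`; this `F` is twice continuously differentiable, solves `−F'' + V F = zF`,
and `F(t) = e^{-κt} I` for `t ≥ R`. -/
theorem jost_solution_exists_unique {n : Type*} [Fintype n] [DecidableEq n]
    (V : ℝ → Matrix n n ℂ) (hVcont : Continuous V)
    (R : ℝ) (hVsupp : ∀ t : ℝ, R ≤ |t| → V t = 0)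
    (z : ℝ) (hz : z < 0) (κ : ℝ) (hκ : κ = Real.sqrt (-z)) :
    (∃! F : ℝ → Matrix n n ℂ, Continuous F ∧
      ∀ t : ℝ, F t = Real.exp (-(κ * t)) • (1 : Matrix n n ℂ) +
        κ⁻¹ • ∫ s in Set.Ioi t, Real.sinh (κ * (s - t)) • (V s * F s)) ∧
    ∀ F : ℝ → Matrix n n ℂ,
      (Continuous F ∧
        ∀ t : ℝ, F t = Real.exp (-(κ * t)) • (1 : Matrix n n ℂ) +
          κ⁻¹ • ∫ s in Set.Ioi t, Real.sinh (κ * (s - t)) • (V s * F s)) →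
      (∃ F' F'' : ℝ → Matrix n n ℂ,
        (∀ t, HasDerivAt F (F' t) t) ∧ (∀ t, HasDerivAt F' (F'' t) t) ∧
        Continuous F'' ∧
        ∀ t, -F'' t + V t * F t = (z : ℂ) • F t) ∧
      ∀ t : ℝ, R ≤ t → F t = Real.exp (-(κ * t)) • (1 : Matrix n n ℂ) := by
  let := Matrix.frobeniusNormedRing (m := n) (α := ℂ)
  let := Matrix.frobeniusNormedAlgebra (m := n) (α := ℂ) (R := ℝ)
  have hκ0 : 0 < κ := hκ ▸ Real.sqrt_pos.2 (neg_pos.2 hz)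
  have hκz : κ ^ 2 = -z := hκ ▸ Real.sq_sqrt (neg_nonneg.2 hz.le)
  have hVR : ∀ s ∉ Icc (-|R|) |R|, V s = 0 := fun s hs =>
    hVsupp s ((le_abs_self R).trans (not_lt.1 fun h => hs (abs_le.1 h.le)))
  refine ⟨existsUnique_continuous_eq_jostRHS hVcont (by simp) hVR hκ0 1,
    fun F ⟨hFc, hF⟩ => ⟨?_, fun t ht => (hF t).trans (jostRHS_of_forall_gt ?_)⟩⟩
  · have hF' : ∀ t, F t = jostRHS κ 1 (fun s => V s * F s) t := hF
    have hW : Continuous fun s => V s * F s := hVcont.mul hFc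
    have hWc : HasCompactSupport fun s => V s * F s :=
      (HasCompactSupport.intro isCompact_Icc hVR).mul_right
    refine ⟨jostRHSDeriv κ 1 (fun s => V s * F s), fun t => κ ^ 2 • F t + V t * F t,
      fun t => (hasDerivAt_jostRHS hW hWc hκ0.ne' t).congr_of_eventuallyEq (.of_forall hF'),
      fun t => (hasDerivAt_jostRHSDeriv hW hWc hκ0.ne' t).congr_deriv (by rw [← hF' t]),
      by fun_prop, fun t => ?_⟩
    beta_reduce
    rw [hκz, ← Complex.coe_smul]
    module
  · exact fun s hs => by rw [hVsupp s (ht.trans (hs.le.trans (le_abs_self s))), zero_mul]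
end
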